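/- Let C be the set of covectors of a sweep oriented matroid on E_n (each covector X corresponding to an ordered partition with surjection p_X : [n] → [l_X]). For each X ∈ C and 1 ≤ k ≤ 2·l_X + 1, define the sign vector X^k ∈ {+,-,0}^{[n] ∪ E_n} by: X^k_i = - if p_X(i) ≤ ⌊(k-1)/2⌋, X^k_i = + if p_X(i) > ⌊k/2⌋, X^k_i = 0 if k is even and p_X(i) = k/2; and X^k_{(i,j)} = X_{(i,j)}. Then the collection {X^k : X ∈ C, 1 ≤ k ≤ 2·l_X + 1} satisfies the covector axioms of an oriented matroid (contains the zero vector, is closed under negation and composition, and satisfies covector elimination). -/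

import Mathlib

/-- The set `E_n = {(i,j) : 1 ≤ i < j ≤ n}`. -/
abbrev Pairs (n : ℕ) := {p : Fin n × Fin n // p.1 < p.2}

/-- Composition of sign vectors: `(X ∘ Y)_e = X_e` if `X_e ≠ 0`, else `Y_e`. -/
def signComp {E : Type*} (X Y : E → SignType) : E → SignType :=
  fun e => if X e = 0 then Y e else X e

/-- The covector axioms for oriented matroids: (V0) the zero vector belongs, (V1)
closure under negation, (V2) closure under composition, (V3) covector elimination. -/
def IsOrientedMatroid {E : Type*} (C : Set (E → SignType)) : Prop :=
  (fun _ => 0) ∈ C ∧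
  (∀ X ∈ C, -X ∈ C) ∧
  (∀ X ∈ C, ∀ Y ∈ C, signComp X Y ∈ C) ∧
  (∀ X ∈ C, ∀ Y ∈ C, ∀ e, X e ≠ 0 → X e = -Y e →
    ∃ Z ∈ C, Z e = 0 ∧ ∀ f, ¬(X f ≠ 0 ∧ X f = -Y f) → Z f = signComp X Y f)

/-- The conformal (componentwise) partial order on sign vectors: `0 ≺ +`, `0 ≺ -`. -/
def covLE {E : Type*} (X Y : E → SignType) : Prop := ∀ e, X e = 0 ∨ X e = Y e

/-- A covector of the braid oriented matroid on `E_n`: the sign vector obtained from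
an ordered partition of `[n]` (given by a surjection `p`) via
`X_{(i,j)} = sign (p j - p i)`. -/
def IsBraidCovector {n : ℕ} (X : Pairs n → SignType) : Prop :=
  ∃ (l : ℕ) (p : Fin n → Fin l), Function.Surjective p ∧
    ∀ e : Pairs n, X e =
      if p e.1.1 < p e.1.2 then 1 else if p e.1.2 < p e.1.1 then -1 else 0

/-- The covectors `X^k` of the big oriented matroid of a sweep oriented matroid, on
the ground set `[n] ∪ E_n`: for each covector `X`, with associated surjection
`p : [n] → [l]` (values of `p` are shifted by one to match the paper's `p_X : [n] → [l]`),
and each `1 ≤ k ≤ 2l+1`, the sign vector which is `-` on `i` with `p_X(i) ≤ ⌊(k-1)/2⌋`,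
`+` on `i` with `p_X(i) > ⌊k/2⌋`, `0` on the remaining `i` (only for `k` even, where
`p_X(i) = k/2`), and agrees with `X` on `E_n`. -/
def BigCovectors {n : ℕ} (C : Set (Pairs n → SignType)) :
    Set ((Fin n ⊕ Pairs n) → SignType) :=
  { Z | ∃ X ∈ C, ∃ (l : ℕ) (p : Fin n → Fin l), Function.Surjective p ∧
      (∀ e : Pairs n, X e =
        if p e.1.1 < p e.1.2 then 1 else if p e.1.2 < p e.1.1 then -1 else 0) ∧
      ∃ k : ℕ, 1 ≤ k ∧ k ≤ 2 * l + 1 ∧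
        (∀ i : Fin n, Z (Sum.inl i) =
          if (p i : ℕ) + 1 ≤ (k - 1) / 2 then -1
          else if k / 2 < (p i : ℕ) + 1 then 1 else 0) ∧
        (∀ e : Pairs n, Z (Sum.inr e) = X e) }

/-- The little oriented matroid of a sweep oriented matroid: the restriction of its
big oriented matroid to the ground set `[n]`. -/
def LittleCovectors {n : ℕ} (C : Set (Pairs n → SignType)) : Set (Fin n → SignType) :=
  { Y | ∃ Z ∈ BigCovectors C, ∀ i, Y i = Z (Sum.inl i) }

/-- There is a chain of `r+1` distinct covectors in the conformal order. -/
def HasChain {E : Type*} (C : Set (E → SignType)) (r : ℕ) : Prop :=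
  ∃ c : Fin (r + 1) → (E → SignType), (∀ i, c i ∈ C) ∧
    ∀ i j : Fin (r + 1), i < j → covLE (c i) (c j) ∧ c i ≠ c j

/-- The set of covectors has rank `r`: maximal chains in the poset of covectors have
length `r`. -/
def HasRank {E : Type*} (C : Set (E → SignType)) (r : ℕ) : Prop :=
  HasChain C r ∧ ¬ HasChain C (r + 1)

/-- Restriction of a set of covectors to a subset `F` of the ground set. -/
def restrictSet {E : Type*} (C : Set (E → SignType)) (F : Set E) : Set (F → SignType) :=
  { Y | ∃ X ∈ C, ∀ e : F, Y e = X e.1 }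

/-- A flat of an oriented matroid: the zero set of a covector. -/
def IsFlat {E : Type*} (C : Set (E → SignType)) (F : Set E) : Prop :=
  ∃ X ∈ C, F = {e | X e = 0}

/-!
A covector `X^k` is determined by `X` together with its restriction `w` to `[n]`, and `w` is a
*cut* of the ordered partition of `X`: a weakly increasing `{-, 0, +}`-labelling of its blocks
that vanishes on at most one block. So `BigCovectors C` is the set of pairs `(w, X)` with `X ∈ C`
and `w` a cut of `X`, and zero, negation and composition carry over from `C`.

Elimination at a pair `e ∈ E_n` eliminates in `C` and re-cuts the eliminant so that it agrees with
`w ∘ w'` off the separation set. Elimination at `i₀ ∈ [n]`, with `w i₀ = -` and `w' i₀ = +`, needs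
a covector `V ∈ C` that agrees with `X ∘ Y` off `S(X, Y)` and places `i₀` where `w ∘ w'` says:
above the unseparated elements where `w ∘ w'` is `-`, below those where it is `+`, in the block of
those where it is `0`. If there is such a zero `j`, eliminate `X ∘ Y` against `Y ∘ X` at `(i₀, j)`.
Otherwise, among the covectors that already place `i₀` below the `+` part, take `V` with the
fewest separations from `Y ∘ X`; then `V ∘ Y` works, because a wrongly ordered pair `(i₀, b)` of
`V` could be eliminated against `Y ∘ X`, and the eliminant would have fewer separations.
-/

open Set Function

section SignVectors

variable {E : Type*}

def sepSet (X Y : E → SignType) : Set E := {e | X e ≠ 0 ∧ X e = -Y e}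

lemma signComp_neg (X Y : E → SignType) : signComp (-X) (-Y) = -signComp X Y := by
  have key : ∀ a b : SignType, (if -a = 0 then -b else -a) = -(if a = 0 then b else a) := by
    decide +kernel
  funext e
  exact key (X e) (Y e)

lemma sepSet_neg (X Y : E → SignType) : sepSet (-X) (-Y) = sepSet X Y := by
  have key : ∀ a b : SignType, (-a ≠ 0 ∧ -a = -(-b)) ↔ (a ≠ 0 ∧ a = -b) := by
    decide +kernel
  ext e
  exact key (X e) (Y e)

lemma signComp_signComp_swap (X Y : E → SignType) :
    signComp (signComp X Y) (signComp Y X) = signComp X Y := by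
  have key : ∀ a b : SignType, (if (if a = 0 then b else a) = 0 then (if b = 0 then a else b)
      else (if a = 0 then b else a)) = if a = 0 then b else a := by
    decide +kernel
  funext e
  exact key (X e) (Y e)

lemma sepSet_signComp_swap (X Y : E → SignType) :
    sepSet (signComp X Y) (signComp Y X) = sepSet X Y := by
  have key : ∀ a b : SignType, ((if a = 0 then b else a) ≠ 0 ∧
      (if a = 0 then b else a) = -(if b = 0 then a else b)) ↔ (a ≠ 0 ∧ a = -b) := by
    decide +kernel
  ext e
  exact key (X e) (Y e)

lemma eqOn_signComp_swap (X Y : E → SignType) :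
    EqOn (signComp Y X) (signComp X Y) (sepSet X Y)ᶜ := by
  have key : ∀ a b : SignType, ¬(a ≠ 0 ∧ a = -b) →
      (if b = 0 then a else b) = if a = 0 then b else a := by
    decide +kernel
  intro e he
  exact key (X e) (Y e) he

lemma sepSet_subset_of_eqOn {Z V W : E → SignType}
    (h : EqOn Z (signComp V W) (sepSet V W)ᶜ) : sepSet Z W ⊆ sepSet V W := by
  have key : ∀ a b : SignType, ¬(a ≠ 0 ∧ a = -b) →
      ¬((if a = 0 then b else a) ≠ 0 ∧ (if a = 0 then b else a) = -b) := by
    decide +kernel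
  intro e he
  by_contra hVW
  have he' : Z e ≠ 0 ∧ Z e = -W e := he
  rw [h hVW] at he'
  exact key (V e) (W e) hVW he'

lemma eqOn_of_eliminant {S : Set E} {T V W Z : E → SignType} (hV : EqOn V T Sᶜ)
    (hW : EqOn W T Sᶜ) (hZ : EqOn Z (signComp V W) (sepSet V W)ᶜ) : EqOn Z T Sᶜ := by
  have key : ∀ a : SignType, ¬(a ≠ 0 ∧ a = -a) := by
    decide +kernel
  intro e he
  have hVW : e ∉ sepSet V W := by
    change ¬(V e ≠ 0 ∧ V e = -W e)
    rw [hV he, hW he]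
    exact key (T e)
  rw [hZ hVW, signComp, hV he, hW he, ite_self]

lemma eqOn_signComp_right {S : Set E} {V X Y : E → SignType}
    (h : EqOn V (signComp X Y) S) : EqOn (signComp V Y) (signComp X Y) S := by
  have key : ∀ a b : SignType, (if (if a = 0 then b else a) = 0 then b
      else (if a = 0 then b else a)) = if a = 0 then b else a := by
    decide +kernel
  intro e he
  change (if V e = 0 then Y e else V e) = signComp X Y e
  rw [h he]
  exact key (X e) (Y e)

lemma eqOn_of_neg {U Z W : E → SignType}
    (h : EqOn U (signComp (-Z) (-W)) (sepSet (-Z) (-W))ᶜ) :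
    EqOn (-U) (signComp Z W) (sepSet Z W)ᶜ := by
  rw [signComp_neg, sepSet_neg] at h
  intro e he
  simp [h he]

lemma eqOn_sumElim {α β : Type*} {u : α → SignType} {V : β → SignType}
    {Z W : α ⊕ β → SignType}
    (hu : EqOn u (signComp (Z ∘ Sum.inl) (W ∘ Sum.inl)) (sepSet (Z ∘ Sum.inl) (W ∘ Sum.inl))ᶜ)
    (hV : EqOn V (signComp (Z ∘ Sum.inr) (W ∘ Sum.inr)) (sepSet (Z ∘ Sum.inr) (W ∘ Sum.inr))ᶜ) :
    EqOn (Sum.elim u V) (signComp Z W) (sepSet Z W)ᶜ := by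
  rintro (a | b) h
  exacts [hu h, hV h]

end SignVectors

section Cuts

/-- `a`, `b` are the labels of two elements `i`, `j` and `x` is the sign of `(i, j)` in an ordered
partition: the labelling is weakly increasing along the partition and its zeros lie in a single
block. -/
def IsCutAt (a b x : SignType) : Prop :=
  (a < b → x = 1) ∧ (b < a → x = -1) ∧ (a = 0 → b = 0 → x = 0)

instance (a b x : SignType) : Decidable (IsCutAt a b x) := by
  unfold IsCutAt
  infer_instance

lemma IsCutAt.neg : ∀ {a b x : SignType}, IsCutAt a b x → IsCutAt (-a) (-b) (-x) := by
  decide +kernel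

lemma IsCutAt.signComp : ∀ {a b x a' b' y : SignType}, IsCutAt a b x → IsCutAt a' b' y →
    IsCutAt (if a = 0 then a' else a) (if b = 0 then b' else b) (if x = 0 then y else x) := by
  decide +kernel

lemma IsCutAt.not_sep : ∀ {a b x a' b' y : SignType}, IsCutAt a b x → IsCutAt a' b' y →
    ¬(a ≠ 0 ∧ a = -a') → ¬(b ≠ 0 ∧ b = -b') →
    ((if a = 0 then a' else a) = (if b = 0 then b' else b) → (if a = 0 then a' else a) = 0) →
    ¬(x ≠ 0 ∧ x = -y) := by
  decide +kernel

lemma isCutAt_self : ∀ {c x : SignType}, c ≠ 0 → IsCutAt c c x := by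
  decide +kernel

lemma isCutAt_zero_left_iff : ∀ {c x : SignType}, IsCutAt 0 c x ↔ x = c := by
  decide +kernel

lemma isCutAt_zero_right_iff : ∀ {c x : SignType}, IsCutAt c 0 x ↔ x = -c := by
  decide +kernel

variable {ι : Type*}

def IsCutOn (F : Set ι) (w : ι → SignType) (R : ι × ι → SignType) : Prop :=
  ∀ i ∈ F, ∀ j ∈ F, IsCutAt (w i) (w j) (R (i, j))

lemma IsCutOn.insert [DecidableEq ι] {F : Set ι} {φ : ι → SignType} {R : ι × ι → SignType}
    {i₀ : ι} (h : IsCutOn F φ R) (hi₀ : i₀ ∉ F) (hself : R (i₀, i₀) = 0)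
    (hswap : ∀ j, R (j, i₀) = -R (i₀, j)) (hrow : ∀ j ∈ F, R (i₀, j) = φ j) :
    IsCutOn (insert i₀ F) (update φ i₀ 0) R := by
  have hφ : ∀ j ∈ F, update φ i₀ 0 j = φ j := fun j hj =>
    update_of_ne (ne_of_mem_of_not_mem hj hi₀) _ _
  rintro i (rfl | hi) j (rfl | hj)
  · rw [hself, update_self]
    decide
  · rw [update_self, hφ j hj, hrow j hj]
    exact isCutAt_zero_left_iff.2 rfl
  · rw [update_self, hφ i hi, hswap, hrow i hi]
    exact isCutAt_zero_right_iff.2 rfl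
  · rw [hφ i hi, hφ j hj]
    exact h i hi j hj

end Cuts

section CmpSign

def cmpSign {α : Type*} [LinearOrder α] (a b : α) : SignType :=
  if a < b then 1 else if b < a then -1 else 0

variable {α β : Type*} [LinearOrder α] [LinearOrder β]

lemma cmpSign_swap (a b : α) : cmpSign b a = -cmpSign a b := by
  unfold cmpSign
  split_ifs <;> first | rfl | (exfalso; order)

lemma cmpSign_self (a : α) : cmpSign a a = 0 := by
  simp [cmpSign]

lemma cmpSign_eq_one_iff {a b : α} : cmpSign a b = 1 ↔ a < b := by
  unfold cmpSign
  split_ifs <;> simp_all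

lemma cmpSign_eq_zero_iff {a b : α} : cmpSign a b = 0 ↔ a = b := by
  unfold cmpSign
  split_ifs <;> simp_all [ne_of_lt, ne_of_gt]
  order

lemma cmpSign_map_eq {f : α → β} (hf : StrictMono f) (a b : α) :
    cmpSign (f a) (f b) = cmpSign a b := by
  simp only [cmpSign, hf.lt_iff_lt]

lemma eq_cmpSign_of {s : SignType} {a b : α} (hneg : s = -1 → b < a) (hzero : s = 0 → a = b)
    (hpos : s = 1 → a < b) : s = cmpSign a b := by
  unfold cmpSign
  cases s
  · simp [hzero rfl]
  · have := hneg rfl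
    simp [this, this.not_gt]
  · simp [hpos rfl]

lemma isCutAt_cmpSign (a b c : α) : IsCutAt (cmpSign c a) (cmpSign c b) (cmpSign a b) := by
  unfold IsCutAt cmpSign
  refine ⟨?_, ?_, ?_⟩ <;> split_ifs <;> first | decide | (exfalso; order)

lemma isCutOn_cmpSign {ι : Type*} {l : ℕ} (p : ι → Fin l) (k : ℕ) :
    IsCutOn univ (fun a => cmpSign k (2 * (p a : ℕ) + 2)) fun q => cmpSign (p q.1) (p q.2) := by
  have hf : StrictMono fun a : Fin l => 2 * (a : ℕ) + 2 := fun a b h => by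
    simp only [Fin.lt_def] at h ⊢
    omega
  intro i _ j _
  beta_reduce
  rw [← cmpSign_map_eq hf (p i) (p j)]
  exact isCutAt_cmpSign _ _ _

lemma exists_cut {ι : Type*} [Fintype ι] {l : ℕ} (p : ι → Fin l) {F : Set ι}
    {φ : ι → SignType} (h : IsCutOn F φ fun q => cmpSign (p q.1) (p q.2)) :
    ∃ k, 1 ≤ k ∧ k ≤ 2 * l + 1 ∧ ∀ a ∈ F, φ a = cmpSign k (2 * (p a : ℕ) + 2) := by
  have hlt : ∀ a ∈ F, ∀ b ∈ F, φ a < φ b → (p a : ℕ) < p b := fun a ha b hb hab =>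
    Fin.lt_def.1 (cmpSign_eq_one_iff.1 ((h a ha b hb).1 hab))
  -- `k` is the block labelled `0` if there is one, and otherwise lies just above the last block
  -- labelled `-`.
  by_cases hz : ∃ a₀ ∈ F, φ a₀ = 0
  · obtain ⟨a₀, ha₀, hφa₀⟩ := hz
    have heq : ∀ a ∈ F, φ a = 0 → (p a : ℕ) = p a₀ := fun a ha hφa =>
      Fin.val_eq_of_eq (cmpSign_eq_zero_iff.1 ((h a ha a₀ ha₀).2.2 hφa hφa₀))
    refine ⟨2 * p a₀ + 2, by omega, by have := (p a₀).isLt; omega, fun a ha => eq_cmpSign_of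
      (fun hφa => ?_) (fun hφa => ?_) (fun hφa => ?_)⟩
    · have := hlt a ha a₀ ha₀ (by rw [hφa, hφa₀]; decide)
      omega
    · have := heq a ha hφa
      omega
    · have := hlt a₀ ha₀ a ha (by rw [hφa, hφa₀]; decide)
      omega
  · push Not at hz
    classical
    set m := (Finset.univ.filter fun b => b ∈ F ∧ φ b = -1).sup fun b => (p b : ℕ) + 1
    have hml : m ≤ l := Finset.sup_le fun b _ => (p b).isLt
    refine ⟨2 * m + 1, by omega, by omega, fun a ha => eq_cmpSign_of
      (fun hφa => ?_) (fun hφa => absurd hφa (hz a ha)) (fun hφa => ?_)⟩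
    · have : (p a : ℕ) + 1 ≤ m :=
        Finset.le_sup (f := fun b => (p b : ℕ) + 1) (by simp [ha, hφa])
      omega
    · have : m ≤ p a := Finset.sup_le fun b hb => by
        simp only [Finset.mem_filter, Finset.mem_univ, true_and] at hb
        exact hlt b hb.1 a ha (by rw [hb.2, hφa]; decide)
      omega

end CmpSign

section Pairs

variable {n : ℕ}

def pairSign (X : Pairs n → SignType) (q : Fin n × Fin n) : SignType :=
  if h : q.1 < q.2 then X ⟨q, h⟩ else if h' : q.2 < q.1 then -X ⟨q.swap, h'⟩ else 0

variable {X Y V T : Pairs n → SignType} {i j k : Fin n}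

lemma pairSign_of_lt (h : i < j) : pairSign X (i, j) = X ⟨(i, j), h⟩ :=
  dif_pos h

lemma pairSign_of_gt (h : j < i) : pairSign X (i, j) = -X ⟨(j, i), h⟩ :=
  (dif_neg h.not_gt).trans (dif_pos h)

lemma pairSign_self : pairSign X (i, i) = 0 := by
  simp [pairSign]

lemma pairSign_swap : pairSign X (j, i) = -pairSign X (i, j) := by
  rcases lt_trichotomy i j with h | rfl | h
  · rw [pairSign_of_gt h, pairSign_of_lt h]
  · rw [pairSign_self, neg_zero]
  · rw [pairSign_of_lt h, pairSign_of_gt h, neg_neg]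

lemma pairSign_cases (q : Fin n × Fin n) : (∀ X, pairSign X q = 0) ∨
    ∃ e : Pairs n, (∀ X, pairSign X q = X e) ∨ ∀ X, pairSign X q = -X e := by
  obtain ⟨i, j⟩ := q
  rcases lt_trichotomy i j with h | rfl | h
  · exact Or.inr ⟨_, Or.inl fun X => pairSign_of_lt h⟩
  · exact Or.inl fun X => pairSign_self
  · exact Or.inr ⟨_, Or.inr fun X => pairSign_of_gt h⟩

lemma pairSign_zero : pairSign (fun _ : Pairs n => 0) = fun _ => 0 := by
  funext q
  rcases pairSign_cases q with h | ⟨e, h | h⟩ <;> simp [h]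

lemma pairSign_neg (X : Pairs n → SignType) : pairSign (-X) = -pairSign X := by
  funext q
  rcases pairSign_cases q with h | ⟨e, h | h⟩ <;> simp [h]

lemma pairSign_signComp (X Y : Pairs n → SignType) :
    pairSign (signComp X Y) = signComp (pairSign X) (pairSign Y) := by
  funext q
  rcases pairSign_cases q with h | ⟨e, h | h⟩ <;> simp only [h, signComp]
  · simp
  · exact (congrFun (signComp_neg X Y) e).symm

lemma eqOn_pairSign (h : EqOn V T (sepSet X Y)ᶜ) :
    EqOn (pairSign V) (pairSign T) (sepSet (pairSign X) (pairSign Y))ᶜ := by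
  intro q hq
  rcases pairSign_cases q with hq' | ⟨e, hq' | hq'⟩
  · rw [hq', hq']
  · simp only [mem_compl_iff, sepSet, mem_ofPred_eq, hq'] at hq ⊢
    exact h hq
  · rw [← sepSet_neg] at h
    simp only [mem_compl_iff, sepSet, mem_ofPred_eq, hq'] at hq ⊢
    rw [h hq]

lemma pairSign_of_rep {l : ℕ} {p : Fin n → Fin l}
    (hp : ∀ e : Pairs n, X e = cmpSign (p e.1.1) (p e.1.2)) :
    pairSign X = fun q => cmpSign (p q.1) (p q.2) := by
  funext ⟨i, j⟩
  rcases lt_trichotomy i j with h | rfl | h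
  · rw [pairSign_of_lt h, hp]
  · rw [pairSign_self, cmpSign_self]
  · rw [pairSign_of_gt h, hp, ← cmpSign_swap]

lemma IsBraidCovector.pairSign_eq_of_eq_zero (hV : IsBraidCovector V)
    (h : pairSign V (i, k) = 0) : pairSign V (i, j) = pairSign V (k, j) := by
  obtain ⟨l, p, -, hp⟩ := hV
  rw [pairSign_of_rep hp] at h ⊢
  exact congrArg (cmpSign · _) (cmpSign_eq_zero_iff.1 h)

lemma IsOrientedMatroid.exists_pairSign_eq_zero {C : Set (Pairs n → SignType)}
    (hOM : IsOrientedMatroid C) (hX : X ∈ C) (hY : Y ∈ C) {q : Fin n × Fin n}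
    (hq : q ∈ sepSet (pairSign X) (pairSign Y)) :
    ∃ Z ∈ C, pairSign Z q = 0 ∧ EqOn Z (signComp X Y) (sepSet X Y)ᶜ := by
  rcases pairSign_cases q with h | ⟨e, h | h⟩
  · exact absurd (h X) hq.1
  · have he : e ∈ sepSet X Y := by rwa [sepSet, mem_ofPred_eq, ← h X, ← h Y]
    obtain ⟨Z, hZ, hZe, hZeq⟩ := hOM.2.2.2 X hX Y hY e he.1 he.2
    exact ⟨Z, hZ, (h Z).trans hZe, fun f hf => hZeq f hf⟩
  · have he : e ∈ sepSet X Y := by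
      rw [← sepSet_neg]
      rwa [sepSet, mem_ofPred_eq, Pi.neg_apply, Pi.neg_apply, ← h X, ← h Y]
    obtain ⟨Z, hZ, hZe, hZeq⟩ := hOM.2.2.2 X hX Y hY e he.1 he.2
    exact ⟨Z, hZ, by rw [h, hZe, neg_zero], fun f hf => hZeq f hf⟩

end Pairs

section Cut

variable {n : ℕ} {X Y V : Pairs n → SignType} {w w' : Fin n → SignType}

def IsCut (w : Fin n → SignType) (X : Pairs n → SignType) : Prop :=
  IsCutOn univ w (pairSign X)

lemma isCut_zero : IsCut (fun _ => 0) (fun _ : Pairs n => 0) := by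
  intro i _ j _
  rw [pairSign_zero]
  exact (by decide : IsCutAt 0 0 0)

lemma IsCut.neg (h : IsCut w X) : IsCut (-w) (-X) := by
  intro i _ j _
  rw [pairSign_neg]
  exact (h i trivial j trivial).neg

lemma isCut_signComp (hX : IsCut w X) (hY : IsCut w' Y) :
    IsCut (signComp w w') (signComp X Y) := by
  intro i _ j _
  rw [pairSign_signComp]
  exact (hX i trivial j trivial).signComp (hY i trivial j trivial)

lemma IsCut.isCutOn_sepSet_compl (hX : IsCut w X) (hY : IsCut w' Y)
    (hV : EqOn V (signComp X Y) (sepSet X Y)ᶜ) :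
    IsCutOn (sepSet w w')ᶜ (signComp w w') (pairSign V) := by
  intro i hi j hj
  by_cases hc : signComp w w' i = signComp w w' j → signComp w w' i = 0
  · have hq : (i, j) ∉ sepSet (pairSign X) (pairSign Y) :=
      (hX i trivial j trivial).not_sep (hY i trivial j trivial) hi hj hc
    rw [eqOn_pairSign hV hq]
    exact isCut_signComp hX hY i trivial j trivial
  · obtain ⟨heq, hne⟩ := Classical.not_imp.1 hc
    rw [heq] at hne ⊢
    exact isCutAt_self hne

lemma IsBraidCovector.exists_isCut (hV : IsBraidCovector V) {F : Set (Fin n)}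
    {φ : Fin n → SignType} (h : IsCutOn F φ (pairSign V)) : ∃ w, IsCut w V ∧ EqOn w φ F := by
  obtain ⟨l, p, -, hp⟩ := hV
  rw [pairSign_of_rep hp] at h
  obtain ⟨k, -, -, hk⟩ := exists_cut p h
  refine ⟨_, ?_, fun a ha => (hk a ha).symm⟩
  rw [IsCut, pairSign_of_rep hp]
  exact isCutOn_cmpSign p k

end Cut

section BigCovectors

variable {n : ℕ} {C : Set (Pairs n → SignType)}

/-- In doubled coordinates, with block `m` at `2 m + 2`, the sign vector `X^k` compares every
block with a new element at position `k`. -/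
lemma ite_eq_cmpSign (m k : ℕ) :
    (if m + 1 ≤ (k - 1) / 2 then -1 else if k / 2 < m + 1 then 1 else 0 : SignType) =
      cmpSign k (2 * m + 2) := by
  unfold cmpSign
  split_ifs <;> first | rfl | omega

theorem mem_bigCovectors_iff (hsweep : ∀ X ∈ C, IsBraidCovector X)
    {Z : Fin n ⊕ Pairs n → SignType} :
    Z ∈ BigCovectors C ↔ Z ∘ Sum.inr ∈ C ∧ IsCut (Z ∘ Sum.inl) (Z ∘ Sum.inr) := by
  constructor
  · rintro ⟨X, hX, l, p, -, hp, k, -, -, hw, hE⟩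
    have hZX : Z ∘ Sum.inr = X := funext hE
    have hZw : Z ∘ Sum.inl = fun i => cmpSign k (2 * (p i : ℕ) + 2) :=
      funext fun i => (hw i).trans (ite_eq_cmpSign _ _)
    rw [hZX, hZw, IsCut, pairSign_of_rep hp]
    exact ⟨hX, isCutOn_cmpSign p k⟩
  · rintro ⟨hX, hw⟩
    obtain ⟨l, p, hsurj, hp⟩ := hsweep _ hX
    rw [IsCut, pairSign_of_rep hp] at hw
    obtain ⟨k, hk1, hk2, hk⟩ := exists_cut p hw
    exact ⟨_, hX, l, p, hsurj, hp, k, hk1, hk2,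
      fun i => (hk i trivial).trans (ite_eq_cmpSign _ _).symm, fun e => rfl⟩

theorem zero_mem_bigCovectors (hOM : IsOrientedMatroid C)
    (hsweep : ∀ X ∈ C, IsBraidCovector X) : (fun _ => 0) ∈ BigCovectors C :=
  (mem_bigCovectors_iff hsweep).2 ⟨hOM.1, isCut_zero⟩

theorem neg_mem_bigCovectors (hOM : IsOrientedMatroid C)
    (hsweep : ∀ X ∈ C, IsBraidCovector X) {Z : Fin n ⊕ Pairs n → SignType}
    (hZ : Z ∈ BigCovectors C) : -Z ∈ BigCovectors C := by
  rw [mem_bigCovectors_iff hsweep] at hZ ⊢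
  exact ⟨hOM.2.1 _ hZ.1, hZ.2.neg⟩

theorem signComp_mem_bigCovectors (hOM : IsOrientedMatroid C)
    (hsweep : ∀ X ∈ C, IsBraidCovector X) {Z W : Fin n ⊕ Pairs n → SignType}
    (hZ : Z ∈ BigCovectors C) (hW : W ∈ BigCovectors C) : signComp Z W ∈ BigCovectors C := by
  rw [mem_bigCovectors_iff hsweep] at hZ hW ⊢
  exact ⟨hOM.2.2.1 _ hZ.1 _ hW.1, isCut_signComp hZ.2 hW.2⟩

variable {X Y : Pairs n → SignType} {w w' : Fin n → SignType} {i₀ : Fin n}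

lemma IsCut.pairSign_eq_one (hX : IsCut w X) (hi₀ : w i₀ = -1) {j : Fin n}
    (hj : 0 ≤ signComp w w' j) : pairSign X (i₀, j) = 1 := by
  have key : ∀ a a' : SignType, 0 ≤ (if a = 0 then a' else a) → -1 < a := by
    decide +kernel
  exact (hX i₀ trivial j trivial).1 (hi₀ ▸ key (w j) (w' j) hj)

lemma IsCut.pairSign_eq_neg_one (hY : IsCut w' Y) (hi₀ : w' i₀ = 1) {j : Fin n}
    (hj : j ∉ sepSet w w') (hj' : signComp w w' j ≤ 0) : pairSign Y (i₀, j) = -1 := by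
  have key : ∀ a a' : SignType, ¬(a ≠ 0 ∧ a = -a') → (if a = 0 then a' else a) ≤ 0 → a' < 1 := by
    decide +kernel
  exact (hY i₀ trivial j trivial).2.1 (hi₀ ▸ key (w j) (w' j) hj hj')

lemma exists_row_of_eq_zero (hOM : IsOrientedMatroid C) (hsweep : ∀ X ∈ C, IsBraidCovector X)
    (hX : X ∈ C) (hY : Y ∈ C) (hcX : IsCut w X) (hcY : IsCut w' Y) (hi₀ : w i₀ = -1)
    (hi₀' : w' i₀ = 1) {j₁ : Fin n} (hj₁ : j₁ ∉ sepSet w w') (hj₁0 : signComp w w' j₁ = 0) :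
    ∃ V ∈ C, EqOn V (signComp X Y) (sepSet X Y)ᶜ ∧
      ∀ j ∉ sepSet w w', pairSign V (i₀, j) = signComp w w' j := by
  have hsep : (i₀, j₁) ∈ sepSet (pairSign (signComp X Y)) (pairSign (signComp Y X)) := by
    simp only [sepSet, mem_ofPred_eq, pairSign_signComp, signComp,
      hcX.pairSign_eq_one hi₀ hj₁0.ge, hcY.pairSign_eq_neg_one hi₀' hj₁ hj₁0.le]
    decide
  obtain ⟨V, hV, hV0, hVeq⟩ :=
    hOM.exists_pairSign_eq_zero (hOM.2.2.1 X hX Y hY) (hOM.2.2.1 Y hY X hX) hsep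
  rw [signComp_signComp_swap, sepSet_signComp_swap] at hVeq
  refine ⟨V, hV, hVeq, fun j hj => ?_⟩
  rw [(hsweep V hV).pairSign_eq_of_eq_zero hV0]
  have := hcX.isCutOn_sepSet_compl hcY hVeq j₁ hj₁ j hj
  rwa [hj₁0, isCutAt_zero_left_iff] at this

lemma exists_sweep_step (hOM : IsOrientedMatroid C) (hsweep : ∀ X ∈ C, IsBraidCovector X)
    (hX : X ∈ C) (hY : Y ∈ C) (hcX : IsCut w X) (hcY : IsCut w' Y) (hi₀' : w' i₀ = 1)
    {V : Pairs n → SignType} (hV : V ∈ C) (hVeq : EqOn V (signComp X Y) (sepSet X Y)ᶜ)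
    {b : Fin n} (hb : b ∉ sepSet w w') (hbneg : signComp w w' b = -1)
    (hVb : pairSign V (i₀, b) = 1) :
    ∃ Z ∈ C, EqOn Z (signComp X Y) (sepSet X Y)ᶜ ∧
      (∀ a ∉ sepSet w w', signComp w w' a = 1 → pairSign Z (i₀, a) = 1) ∧
      (sepSet (pairSign Z) (pairSign (signComp Y X))).ncard <
        (sepSet (pairSign V) (pairSign (signComp Y X))).ncard := by
  have hQb : pairSign (signComp Y X) (i₀, b) = -1 := by
    rw [pairSign_signComp, signComp, hcY.pairSign_eq_neg_one hi₀' hb (hbneg.trans_le (by decide))]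
    rfl
  have hsep : (i₀, b) ∈ sepSet (pairSign V) (pairSign (signComp Y X)) := by
    simp only [sepSet, mem_ofPred_eq, hVb, hQb]
    decide
  obtain ⟨Z, hZ, hZ0, hZeq⟩ := hOM.exists_pairSign_eq_zero hV (hOM.2.2.1 Y hY X hX) hsep
  have hZeq' : EqOn Z (signComp X Y) (sepSet X Y)ᶜ :=
    eqOn_of_eliminant hVeq (eqOn_signComp_swap X Y) hZeq
  refine ⟨Z, hZ, hZeq', fun a ha ha1 => ?_, ?_⟩
  · rw [(hsweep Z hZ).pairSign_eq_of_eq_zero hZ0]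
    exact (hcX.isCutOn_sepSet_compl hcY hZeq' b hb a ha).1 (by rw [hbneg, ha1]; decide)
  · have hsub := sepSet_subset_of_eqOn (pairSign_signComp V _ ▸ eqOn_pairSign hZeq)
    exact ncard_lt_ncard ((ssubset_iff_of_subset hsub).2 ⟨(i₀, b), hsep, fun h => h.1 hZ0⟩)

lemma exists_row_of_ne_zero (hOM : IsOrientedMatroid C) (hsweep : ∀ X ∈ C, IsBraidCovector X)
    (hX : X ∈ C) (hY : Y ∈ C) (hcX : IsCut w X) (hcY : IsCut w' Y) (hi₀ : w i₀ = -1)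
    (hi₀' : w' i₀ = 1) (hM : ∀ j ∉ sepSet w w', signComp w w' j ≠ 0) :
    ∃ V ∈ C, EqOn V (signComp X Y) (sepSet X Y)ᶜ ∧
      ∀ j ∉ sepSet w w', pairSign V (i₀, j) = signComp w w' j := by
  let μ : (Pairs n → SignType) → ℕ := fun V => (sepSet (pairSign V) (pairSign (signComp Y X))).ncard
  have hP : signComp X Y ∈ {V | V ∈ C ∧ EqOn V (signComp X Y) (sepSet X Y)ᶜ ∧
      ∀ a ∉ sepSet w w', signComp w w' a = 1 → pairSign V (i₀, a) = 1} :=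
    ⟨hOM.2.2.1 X hX Y hY, fun _ _ => rfl, fun a _ ha => by
      rw [pairSign_signComp, signComp, hcX.pairSign_eq_one hi₀ (ha.trans_ge (by decide))]
      rfl⟩
  obtain ⟨V, ⟨hV, hVeq, hVrow⟩, hmin⟩ := (measure μ).wf.has_min _ ⟨_, hP⟩
  have hVYrow : ∀ a ∉ sepSet w w', signComp w w' a = 1 → pairSign (signComp V Y) (i₀, a) = 1 :=
    fun a ha ha1 => by rw [pairSign_signComp, signComp, hVrow a ha ha1]; rfl
  refine ⟨signComp V Y, hOM.2.2.1 V hV Y hY, eqOn_signComp_right hVeq, fun j hj => ?_⟩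
  cases h : signComp w w' j with
  | zero => exact absurd h (hM j hj)
  | pos => exact hVYrow j hj h
  | neg =>
    have hYj := hcY.pairSign_eq_neg_one hi₀' hj (h.trans_le (by decide))
    by_contra hne
    have key : ∀ a : SignType, (if a = 0 then -1 else a) ≠ SignType.neg → a = 1 := by
      decide
    rw [pairSign_signComp, signComp, hYj] at hne
    obtain ⟨Z, hZ, hZeq, hZrow, hZμ⟩ :=
      exists_sweep_step hOM hsweep hX hY hcX hcY hi₀' hV hVeq hj h (key _ hne)
    exact hmin Z ⟨hZ, hZeq, hZrow⟩ hZμ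

lemma exists_eliminant_inl (hOM : IsOrientedMatroid C) (hsweep : ∀ X ∈ C, IsBraidCovector X)
    (hX : X ∈ C) (hY : Y ∈ C) (hcX : IsCut w X) (hcY : IsCut w' Y) (hi₀ : w i₀ = -1)
    (hi₀' : w' i₀ = 1) :
    ∃ u V, V ∈ C ∧ IsCut u V ∧ u i₀ = 0 ∧ EqOn u (signComp w w') (sepSet w w')ᶜ ∧
      EqOn V (signComp X Y) (sepSet X Y)ᶜ := by
  classical
  obtain ⟨V, hV, hVeq, hrow⟩ : ∃ V ∈ C, EqOn V (signComp X Y) (sepSet X Y)ᶜ ∧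
      ∀ j ∉ sepSet w w', pairSign V (i₀, j) = signComp w w' j := by
    by_cases hM : ∃ j ∉ sepSet w w', signComp w w' j = 0
    · obtain ⟨j₁, hj₁, hj₁0⟩ := hM
      exact exists_row_of_eq_zero hOM hsweep hX hY hcX hcY hi₀ hi₀' hj₁ hj₁0
    · push Not at hM
      exact exists_row_of_ne_zero hOM hsweep hX hY hcX hcY hi₀ hi₀' hM
  have hi₀sep : i₀ ∉ (sepSet w w')ᶜ := by
    simp only [mem_compl_iff, not_not, sepSet, mem_ofPred_eq, hi₀, hi₀']
    decide
  obtain ⟨u, hu, huφ⟩ := (hsweep V hV).exists_isCut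
    ((hcX.isCutOn_sepSet_compl hcY hVeq).insert hi₀sep pairSign_self (fun _ => pairSign_swap) hrow)
  refine ⟨u, V, hV, hu, ?_, fun j hj => ?_, hVeq⟩
  · rw [huφ (mem_insert _ _), update_self]
  · rw [huφ (mem_insert_of_mem _ hj), update_of_ne (ne_of_mem_of_not_mem hj hi₀sep)]

theorem exists_eliminant_of_eq_neg_one (hOM : IsOrientedMatroid C)
    (hsweep : ∀ X ∈ C, IsBraidCovector X) {Z W : Fin n ⊕ Pairs n → SignType}
    (hZ : Z ∈ BigCovectors C) (hW : W ∈ BigCovectors C) {e : Fin n ⊕ Pairs n}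
    (hZe : Z e = -1) (hWe : W e = 1) :
    ∃ U ∈ BigCovectors C, U e = 0 ∧ EqOn U (signComp Z W) (sepSet Z W)ᶜ := by
  rw [mem_bigCovectors_iff hsweep] at hZ hW
  suffices ∃ u V, V ∈ C ∧ IsCut u V ∧ Sum.elim u V e = 0 ∧
      EqOn u (signComp (Z ∘ Sum.inl) (W ∘ Sum.inl)) (sepSet (Z ∘ Sum.inl) (W ∘ Sum.inl))ᶜ ∧
      EqOn V (signComp (Z ∘ Sum.inr) (W ∘ Sum.inr)) (sepSet (Z ∘ Sum.inr) (W ∘ Sum.inr))ᶜ by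
    obtain ⟨u, V, hV, hu, he, hueq, hVeq⟩ := this
    exact ⟨Sum.elim u V, (mem_bigCovectors_iff hsweep).2 ⟨hV, hu⟩, he, eqOn_sumElim hueq hVeq⟩
  cases e with
  | inl i₀ => exact exists_eliminant_inl hOM hsweep hZ.1 hW.1 hZ.2 hW.2 hZe hWe
  | inr e₀ =>
    obtain ⟨V, hV, hV0, hVeq⟩ :=
      hOM.2.2.2 _ hZ.1 _ hW.1 e₀ (by simp [hZe]) (by simp [hZe, hWe])
    obtain ⟨u, hu, hueq⟩ :=
      (hsweep V hV).exists_isCut (hZ.2.isCutOn_sepSet_compl hW.2 fun f hf => hVeq f hf)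
    exact ⟨u, V, hV, hu, hV0, hueq, fun f hf => hVeq f hf⟩

theorem exists_eliminant (hOM : IsOrientedMatroid C) (hsweep : ∀ X ∈ C, IsBraidCovector X)
    {Z W : Fin n ⊕ Pairs n → SignType} (hZ : Z ∈ BigCovectors C) (hW : W ∈ BigCovectors C)
    {e : Fin n ⊕ Pairs n} (hZe : Z e ≠ 0) (hZW : Z e = -W e) :
    ∃ U ∈ BigCovectors C, U e = 0 ∧ EqOn U (signComp Z W) (sepSet Z W)ᶜ := by
  have key : ∀ a b : SignType, a ≠ 0 → a = -b → (a = -1 ∧ b = 1) ∨ (-a = -1 ∧ -b = 1) := by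
    decide
  rcases key _ _ hZe hZW with ⟨hZe', hWe'⟩ | ⟨hZe', hWe'⟩
  · exact exists_eliminant_of_eq_neg_one hOM hsweep hZ hW hZe' hWe'
  · obtain ⟨U, hU, hU0, hUeq⟩ := exists_eliminant_of_eq_neg_one hOM hsweep
      (neg_mem_bigCovectors hOM hsweep hZ) (neg_mem_bigCovectors hOM hsweep hW) hZe' hWe'
    exact ⟨-U, neg_mem_bigCovectors hOM hsweep hU, by simp [hU0], eqOn_of_neg hUeq⟩

end BigCovectors

/-- If `C` is the set of covectors of a sweep oriented matroid on `E_n` (an oriented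
matroid all of whose covectors are braid covectors), then the collection
`{X^k : X ∈ C, 1 ≤ k ≤ 2 l_X + 1}` of sign vectors on `[n] ∪ E_n` satisfies the
covector axioms of an oriented matroid. -/
theorem bigCovectors_isOrientedMatroid {n : ℕ} (C : Set (Pairs n → SignType))
    (hOM : IsOrientedMatroid C) (hsweep : ∀ X ∈ C, IsBraidCovector X) :
    IsOrientedMatroid (BigCovectors C) := by
  refine ⟨zero_mem_bigCovectors hOM hsweep, fun Z hZ => neg_mem_bigCovectors hOM hsweep hZ,
    fun Z hZ W hW => signComp_mem_bigCovectors hOM hsweep hZ hW,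
    fun Z hZ W hW e hZe hZW => ?_⟩
  obtain ⟨U, hU, hU0, hUeq⟩ := exists_eliminant hOM hsweep hZ hW hZe hZW
  exact ⟨U, hU, hU0, fun f hf => hUeq hf⟩
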